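/- Let α be a nonempty finite type with cardinality A, n ≥ 1, γ > 0, and let P be a probability measure on α^n (functions Fin n → α). Let (X^{(i)})_{i≥1} be i.i.d. random elements of α^n with common law P. For 0 ≤ t ≤ n and y ∈ α^n, let C_m(y, t) = #{i ≤ m : X^{(i)}_s = y_s for all s < t} (so C_m(y, 0) = m), and define Q_m(y) = Π_{t=1}^n (C_m(y, t) + γ) / (C_m(y, t−1) + γ·A). Then Q_m is a probability mass function on α^n with Q_m(y) > 0 for all y, and the Kullback–Leibler divergence D(P‖Q_m) = Σ_{y : P({y})>0} P({y}) · log(P({y})/Q_m(y)) converges to 0 almost surely as m → ∞. -/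

import Mathlib

open MeasureTheory ProbabilityTheory Filter Topology

open scoped Classical

/-- `prefixCount X ω y t m` is the number of the first `m` training sequences
`X 0 ω, …, X (m-1) ω` that agree with `y` on their first `t` coordinates
(so `prefixCount X ω y 0 m = m`). -/
noncomputable def prefixCount {α Ω : Type*} {n : ℕ}
    (X : ℕ → Ω → (Fin n → α)) (ω : Ω) (y : Fin n → α) (t m : ℕ) : ℕ :=
  ((Finset.range m).filter (fun i => ∀ s : Fin n, (s : ℕ) < t → X i ω s = y s)).card

/-- `smoothedModel γ X ω y m` is the Dirichlet-smoothed (parameter `γ`) sequential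
probability assignment `Q_m(y) = ∏_{t=1}^n (C_m(y,t) + γ) / (C_m(y,t-1) + γ·A)`,
predicting each symbol of `y` from its full prefix context. -/
noncomputable def smoothedModel {α Ω : Type*} [Fintype α] {n : ℕ} (γ : ℝ)
    (X : ℕ → Ω → (Fin n → α)) (ω : Ω) (y : Fin n → α) (m : ℕ) : ℝ :=
  ∏ t ∈ Finset.Icc 1 n,
    ((prefixCount X ω y t m : ℝ) + γ) /
      ((prefixCount X ω y (t - 1) m : ℝ) + γ * (Fintype.card α : ℝ))

section Aux

variable {α Ω : Type*} [Fintype α] [Nonempty α] {n : ℕ}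
  (X : ℕ → Ω → (Fin n → α)) (ω : Ω)

lemma prefixCount_congr {y z : Fin n → α} {t m : ℕ}
    (h : ∀ s : Fin n, (s : ℕ) < t → y s = z s) :
    prefixCount X ω y t m = prefixCount X ω z t m := by
  unfold prefixCount
  congr 1
  apply Finset.filter_congr
  intro i _
  constructor <;> intro H s hs
  · rw [← h s hs]; exact H s hs
  · rw [h s hs]; exact H s hs

lemma prefixCount_partition {y : Fin n → α} {k m : ℕ} (hk : k < n) :
    ∑ a : α, prefixCount X ω (Function.update y ⟨k, hk⟩ a) (k + 1) m
      = prefixCount X ω y k m := by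
  unfold prefixCount
  rw [Finset.card_eq_sum_card_fiberwise
    (f := fun i => X i ω ⟨k, hk⟩) (t := Finset.univ) (fun x _ => Finset.mem_univ _)]
  refine Finset.sum_congr rfl (fun a _ => ?_)
  rw [Finset.filter_filter]
  congr 1
  apply Finset.filter_congr
  intro i _
  constructor
  · intro H
    refine ⟨fun s hs => ?_, ?_⟩
    · have h2 := H s (Nat.lt_succ_of_lt hs)
      rwa [Function.update_of_ne (Fin.ne_of_val_ne (Nat.ne_of_lt hs))] at h2
    · have h2 := H ⟨k, hk⟩ (Nat.lt_succ_self k)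
      rwa [Function.update_self] at h2
  · rintro ⟨H1, H2⟩ s hs
    rcases Nat.lt_succ_iff_lt_or_eq.1 hs with h | h
    · rw [Function.update_of_ne (Fin.ne_of_val_ne (Nat.ne_of_lt h))]
      exact H1 s h
    · have : s = ⟨k, hk⟩ := Fin.ext h
      subst this
      rw [Function.update_self]
      exact H2

lemma smoothedModel_key (γ : ℝ) (hγ : 0 < γ) (m : ℕ) :
    ∀ d, d ≤ n → ∀ y : Fin n → α,
      ∑ z ∈ Finset.univ.filter
          (fun z : Fin n → α => ∀ s : Fin n, (s : ℕ) < n - d → z s = y s),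
        ∏ t ∈ Finset.Icc (n - d + 1) n,
          ((prefixCount X ω z t m : ℝ) + γ) /
            ((prefixCount X ω z (t - 1) m : ℝ) + γ * (Fintype.card α : ℝ)) = 1 := by
  have hA : (0 : ℝ) < (Fintype.card α : ℝ) := by
    exact_mod_cast Fintype.card_pos
  intro d
  induction d with
  | zero =>
    intro _ y
    have hfil : Finset.univ.filter
        (fun z : Fin n → α => ∀ s : Fin n, (s : ℕ) < n - 0 → z s = y s) = {y} := by
      ext z
      simp only [Finset.mem_filter, Finset.mem_univ, true_and, Finset.mem_singleton]
      constructor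
      · intro h; funext s; exact h s (by simpa using s.isLt)
      · rintro rfl s _; rfl
    rw [hfil, Finset.sum_singleton, Nat.sub_zero,
      Finset.Icc_eq_empty (by omega), Finset.prod_empty]
  | succ d ih =>
    intro hd y
    set k := n - (d + 1) with hkdef
    have hk : k < n := by omega
    have hkd : k + 1 = n - d := by omega
    have hk1n : k + 1 ≤ n := by omega
    -- split the sum according to the value at coordinate k
    rw [← Finset.sum_fiberwise_of_maps_to
      (g := fun z : Fin n → α => z ⟨k, hk⟩) (t := Finset.univ)
      (fun x _ => Finset.mem_univ _)]
    have hfib : ∀ a : α,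
        (Finset.univ.filter
          (fun z : Fin n → α => ∀ s : Fin n, (s : ℕ) < k → z s = y s)).filter
            (fun z => z ⟨k, hk⟩ = a)
        = Finset.univ.filter
            (fun z : Fin n → α => ∀ s : Fin n, (s : ℕ) < k + 1 →
              z s = Function.update y ⟨k, hk⟩ a s) := by
      intro a
      rw [Finset.filter_filter]
      apply Finset.filter_congr
      intro z _
      constructor
      · rintro ⟨H1, H2⟩ s hs
        rcases Nat.lt_succ_iff_lt_or_eq.1 hs with h | h
        · rw [Function.update_of_ne (Fin.ne_of_val_ne (Nat.ne_of_lt h))]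
          exact H1 s h
        · have : s = ⟨k, hk⟩ := Fin.ext h
          subst this
          rw [Function.update_self]
          exact H2
      · intro H
        refine ⟨fun s hs => ?_, ?_⟩
        · have h2 := H s (Nat.lt_succ_of_lt hs)
          rwa [Function.update_of_ne (Fin.ne_of_val_ne (Nat.ne_of_lt hs))] at h2
        · have h2 := H ⟨k, hk⟩ (Nat.lt_succ_self k)
          rwa [Function.update_self] at h2
    have hden : ((prefixCount X ω y k m : ℝ) + γ * (Fintype.card α : ℝ)) ≠ 0 := by
      positivity
    calc
      ∑ a : α, ∑ z ∈ (Finset.univ.filter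
            (fun z : Fin n → α => ∀ s : Fin n, (s : ℕ) < n - (d+1) → z s = y s)).filter
              (fun z => z ⟨k, hk⟩ = a),
          ∏ t ∈ Finset.Icc (n - (d+1) + 1) n,
            ((prefixCount X ω z t m : ℝ) + γ) /
              ((prefixCount X ω z (t - 1) m : ℝ) + γ * (Fintype.card α : ℝ))
        = ∑ a : α,
            ((prefixCount X ω (Function.update y ⟨k, hk⟩ a) (k+1) m : ℝ) + γ) /
              ((prefixCount X ω y k m : ℝ) + γ * (Fintype.card α : ℝ)) := by
          refine Finset.sum_congr rfl (fun a _ => ?_)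
          rw [show n - (d+1) = k from rfl, hfib a]
          have hsplit : ∀ z : Fin n → α,
              ∏ t ∈ Finset.Icc (k + 1) n,
                ((prefixCount X ω z t m : ℝ) + γ) /
                  ((prefixCount X ω z (t - 1) m : ℝ) + γ * (Fintype.card α : ℝ))
              = (((prefixCount X ω z (k+1) m : ℝ) + γ) /
                  ((prefixCount X ω z k m : ℝ) + γ * (Fintype.card α : ℝ))) *
                ∏ t ∈ Finset.Icc (k + 2) n,
                  ((prefixCount X ω z t m : ℝ) + γ) /
                    ((prefixCount X ω z (t - 1) m : ℝ) + γ * (Fintype.card α : ℝ)) := by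
            intro z
            rw [show Finset.Icc (k+2) n = Finset.Ioc (k+1) n from Finset.Icc_add_one_left_eq_Ioc ..,
              ← Finset.mul_prod_Ioc_eq_prod_Icc hk1n]
            simp
          have hmain : ∀ z ∈ Finset.univ.filter
              (fun z : Fin n → α => ∀ s : Fin n, (s : ℕ) < k + 1 →
                z s = Function.update y ⟨k, hk⟩ a s),
              ∏ t ∈ Finset.Icc (k + 1) n,
                ((prefixCount X ω z t m : ℝ) + γ) /
                  ((prefixCount X ω z (t - 1) m : ℝ) + γ * (Fintype.card α : ℝ))
              = (((prefixCount X ω (Function.update y ⟨k, hk⟩ a) (k+1) m : ℝ) + γ) /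
                  ((prefixCount X ω y k m : ℝ) + γ * (Fintype.card α : ℝ))) *
                ∏ t ∈ Finset.Icc (k + 2) n,
                  ((prefixCount X ω z t m : ℝ) + γ) /
                    ((prefixCount X ω z (t - 1) m : ℝ) + γ * (Fintype.card α : ℝ)) := by
            intro z hz
            rw [Finset.mem_filter] at hz
            have hz' := hz.2
            have e1 : prefixCount X ω z (k+1) m
                = prefixCount X ω (Function.update y ⟨k, hk⟩ a) (k+1) m :=
              prefixCount_congr X ω hz'
            have e2 : prefixCount X ω z k m = prefixCount X ω y k m :=
              prefixCount_congr X ω (fun s hs =>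
                (hz' s (Nat.lt_succ_of_lt hs)).trans
                  (Function.update_of_ne (Fin.ne_of_val_ne (Nat.ne_of_lt hs)) _ _))
            rw [hsplit z, e1, e2]
          rw [Finset.sum_congr rfl hmain, ← Finset.mul_sum]
          have hIH := ih (by omega) (Function.update y ⟨k, hk⟩ a)
          rw [show n - d = k + 1 from hkd.symm] at hIH
          rw [show k + 1 + 1 = k + 2 from rfl] at hIH
          rw [hIH, mul_one]
      _ = 1 := by
          rw [← Finset.sum_div, Finset.sum_add_distrib, ← Nat.cast_sum,
            prefixCount_partition X ω hk, Finset.sum_const, div_eq_one_iff_eq hden]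
          simp [nsmul_eq_mul, mul_comm, Finset.card_univ]
  
lemma smoothedModel_pos (γ : ℝ) (hγ : 0 < γ) (y : Fin n → α) (m : ℕ) :
    0 < smoothedModel γ X ω y m := by
  have hA : (0 : ℝ) < (Fintype.card α : ℝ) := by exact_mod_cast Fintype.card_pos
  unfold smoothedModel
  apply Finset.prod_pos
  intro t _
  apply div_pos <;> positivity

lemma smoothedModel_sum_one (γ : ℝ) (hγ : 0 < γ) (m : ℕ) :
    ∑ y : Fin n → α, smoothedModel γ X ω y m = 1 := by
  have h := smoothedModel_key X ω γ hγ m n le_rfl (Classical.arbitrary _)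
  rw [Nat.sub_self] at h
  have hfil : Finset.univ.filter
      (fun z : Fin n → α => ∀ s : Fin n, (s : ℕ) < 0 →
        z s = Classical.arbitrary (Fin n → α) s) = Finset.univ := by
    apply Finset.filter_true_of_mem
    intro z _ s hs
    omega
  rw [hfil] at h
  simpa [smoothedModel] using h

end Aux

/-- Universal convergence of the LZ78-SPA (Theorem 1 of the paper, in its honest
form): the smoothed empirical product model `Q_m` is an everywhere-positive
probability mass function on `α^n`, and for i.i.d. training sequences with law `P`,
the Kullback–Leibler divergence `D(P‖Q_m)` converges to `0` almost surely. -/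
theorem kl_smoothedModel_tendsto_zero_ae
    {α : Type*} [Fintype α] [Nonempty α] [MeasurableSpace α] [MeasurableSingletonClass α]
    {Ω : Type*} [MeasurableSpace Ω] (μ : Measure Ω) [IsProbabilityMeasure μ]
    (n : ℕ) (hn : 1 ≤ n) (γ : ℝ) (hγ : 0 < γ)
    (P : Measure (Fin n → α)) [IsProbabilityMeasure P]
    (X : ℕ → Ω → (Fin n → α)) (hmeas : ∀ i, Measurable (X i))
    (hindep : iIndepFun X μ)
    (hdist : ∀ i, μ.map (X i) = P) :
    (∀ ω, ∀ m, (∀ y : Fin n → α, 0 < smoothedModel γ X ω y m) ∧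
        ∑ y : Fin n → α, smoothedModel γ X ω y m = 1) ∧
      ∀ᵐ ω ∂μ, Tendsto (fun m =>
          ∑ y ∈ Finset.univ.filter (fun y : Fin n → α => 0 < P {y}),
            (P {y}).toReal * Real.log ((P {y}).toReal / smoothedModel γ X ω y m))
        atTop (𝓝 0) := by
  classical
  refine ⟨fun ω m => ⟨fun y => smoothedModel_pos X ω γ hγ y m,
    smoothedModel_sum_one X ω γ hγ m⟩, ?_⟩
  -- prefix cylinder sets
  set S : (Fin n → α) → ℕ → Set (Fin n → α) :=
    fun y t => {x | ∀ s : Fin n, (s : ℕ) < t → x s = y s} with hSdef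
  have hS : ∀ y t, MeasurableSet (S y t) := by
    intro y t
    have : S y t = ⋂ (s : Fin n) (_ : (s : ℕ) < t), (fun x => x s) ⁻¹' {y s} := by
      ext x; simp [hSdef, Set.mem_iInter]
    rw [this]
    exact MeasurableSet.iInter fun s => MeasurableSet.iInter fun _ =>
      (measurable_pi_apply s) (measurableSet_singleton _)
  -- SLLN for the prefix counts
  have hsl : ∀ (y : Fin n → α) (t : ℕ), ∀ᵐ ω ∂μ,
      Tendsto (fun m => (prefixCount X ω y t m : ℝ) / m) atTop
        (𝓝 (P (S y t)).toReal) := by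
    intro y t
    set φ : (Fin n → α) → ℝ := (S y t).indicator (fun _ => 1) with hφdef
    have hφm : Measurable φ := Measurable.indicator measurable_const (hS y t)
    set Z : ℕ → Ω → ℝ := fun i ω => φ (X i ω) with hZdef
    have hZ0 : Z 0 = Set.indicator ((X 0) ⁻¹' (S y t)) (fun _ => (1 : ℝ)) := by
      funext ω'
      simp [hZdef, hφdef, Set.indicator, Set.mem_preimage]
    have hint : Integrable (Z 0) μ := by
      rw [hZ0]
      exact (integrable_indicator_iff ((hmeas 0) (hS y t))).2
        (integrableOn_const (measure_ne_top μ _))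
    have hindepZ : Pairwise (Function.onFun (IndepFun · · μ) Z) :=
      fun i j hij => (hindep.indepFun hij).comp hφm hφm
    have hidZ : ∀ i, IdentDistrib (Z i) (Z 0) μ μ := fun i =>
      IdentDistrib.comp ⟨(hmeas i).aemeasurable, (hmeas 0).aemeasurable,
        by rw [hdist i, hdist 0]⟩ hφm
    have hexp : μ[Z 0] = (P (S y t)).toReal := by
      rw [hZ0, integral_indicator_const _ ((hmeas 0) (hS y t)),
        ← hdist 0, Measure.map_apply (hmeas 0) (hS y t)]
      simp [Measure.real]
    have hlaw := strong_law_ae_real Z hint hindepZ hidZ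
    rw [hexp] at hlaw
    filter_upwards [hlaw] with ω' hω'
    have hsum : ∀ m, (∑ i ∈ Finset.range m, Z i ω') = (prefixCount X ω' y t m : ℝ) := by
      intro m
      unfold prefixCount
      rw [Finset.card_filter]
      push_cast
      refine Finset.sum_congr rfl (fun i _ => ?_)
      by_cases h : ∀ s : Fin n, (s : ℕ) < t → X i ω' s = y s
      · simp [hZdef, hφdef, Set.indicator, hSdef, h]
      · simp [hZdef, hφdef, Set.indicator, hSdef, h]
    simp only [← hsum]
    exact hω'
  have hae : ∀ᵐ ω ∂μ, ∀ (y : Fin n → α) (t : ℕ),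
      Tendsto (fun m => (prefixCount X ω y t m : ℝ) / m) atTop
        (𝓝 (P (S y t)).toReal) := by
    rw [ae_all_iff]
    intro y
    rw [ae_all_iff]
    exact hsl y
  filter_upwards [hae] with ω hω
  have hzero : Tendsto (fun m =>
      ∑ y ∈ Finset.univ.filter (fun y : Fin n → α => 0 < P {y}),
        (P {y}).toReal * Real.log ((P {y}).toReal / smoothedModel γ X ω y m))
      atTop (𝓝 (∑ y ∈ Finset.univ.filter (fun y : Fin n → α => 0 < P {y}), (0:ℝ))) := by
    apply tendsto_finset_sum
    intro y hy
    rw [Finset.mem_filter] at hy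
    have hy' : 0 < P {y} := hy.2
    have hsub : ∀ t, {y} ⊆ S y t := by
      intro t x hx
      rw [Set.mem_singleton_iff] at hx
      subst hx
      intro s _
      rfl
    have hpt : ∀ t, 0 < (P (S y t)).toReal := fun t =>
      ENNReal.toReal_pos (lt_of_lt_of_le hy' (measure_mono (hsub t))).ne'
        (measure_ne_top P _)
    have hc : 0 < (P {y}).toReal := ENNReal.toReal_pos hy'.ne' (measure_ne_top P _)
    -- limits of the individual factors
    have hfac : ∀ t ∈ Finset.Icc 1 n,
        Tendsto (fun m => ((prefixCount X ω y t m : ℝ) + γ) /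
            ((prefixCount X ω y (t-1) m : ℝ) + γ * (Fintype.card α : ℝ)))
          atTop (𝓝 ((P (S y t)).toReal / (P (S y (t-1))).toReal)) := by
      intro t _
      have hnum : Tendsto (fun m : ℕ => (prefixCount X ω y t m : ℝ) / m + γ / m)
          atTop (𝓝 ((P (S y t)).toReal + 0)) :=
        (hω y t).add (tendsto_const_div_atTop_nhds_zero_nat γ)
      have hden : Tendsto (fun m : ℕ =>
          (prefixCount X ω y (t-1) m : ℝ) / m + γ * (Fintype.card α : ℝ) / m)
          atTop (𝓝 ((P (S y (t-1))).toReal + 0)) :=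
        (hω y (t-1)).add (tendsto_const_div_atTop_nhds_zero_nat _)
      have hlim := hnum.div hden (by rw [add_zero]; exact (hpt (t-1)).ne')
      rw [add_zero, add_zero] at hlim
      apply hlim.congr'
      filter_upwards [eventually_gt_atTop 0] with m hm
      have hm' : (m : ℝ) ≠ 0 := Nat.cast_ne_zero.2 hm.ne'
      simp only [Pi.div_apply]
      rw [← add_div, ← add_div, div_div_div_cancel_right₀ hm']
    have hQ : Tendsto (fun m => smoothedModel γ X ω y m) atTop
        (𝓝 ((P {y}).toReal)) := by
      have hprod := tendsto_finset_prod (Finset.Icc 1 n) hfac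
      have htel : ∀ (f : ℕ → ℝ), (∀ t, f t ≠ 0) → ∀ N : ℕ,
          ∏ t ∈ Finset.Icc 1 N, f t / f (t-1) = f N / f 0 := by
        intro f hf N
        induction N with
        | zero => simp [div_self (hf 0)]
        | succ N ihN =>
          rw [Finset.prod_Icc_succ_top (Nat.succ_le_succ (Nat.zero_le N)), ihN]
          simp only [Nat.add_sub_cancel]
          have h0 := hf 0
          have hN := hf N
          field_simp
      have hval : ∏ t ∈ Finset.Icc 1 n,
          (P (S y t)).toReal / (P (S y (t-1))).toReal = (P {y}).toReal := by
        rw [htel (fun t => (P (S y t)).toReal) (fun t => (hpt t).ne') n]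
        have h0 : S y 0 = Set.univ := by
          ext x; simp [hSdef]
        have hnn : S y n = {y} := by
          ext x
          simp only [hSdef, Set.mem_setOf_eq, Set.mem_singleton_iff]
          constructor
          · intro h; funext s; exact h s s.isLt
          · rintro rfl s _; rfl
        rw [h0, hnn, measure_univ]
        simp
      rw [hval] at hprod
      exact hprod
    have h1 : Tendsto (fun m => (P {y}).toReal / smoothedModel γ X ω y m) atTop
        (𝓝 ((P {y}).toReal / (P {y}).toReal)) :=
      tendsto_const_nhds.div hQ hc.ne'
    rw [div_self hc.ne'] at h1
    have h2 : Tendsto (fun m => Real.log ((P {y}).toReal / smoothedModel γ X ω y m))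
        atTop (𝓝 (Real.log 1)) :=
      ((Real.continuousAt_log one_ne_zero).tendsto).comp h1
    rw [Real.log_one] at h2
    simpa using h2.const_mul ((P {y}).toReal)
  simpa using hzero
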